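/- Suppose ℓ(·; z) : ℝ^d → ℝ is G-Lipschitz for every z and α ∈ (0,1]. Define f(w,τ; z) = (1/α)·max(ℓ(w;z) − τ, 0) + τ on ℝ^d × ℝ. Then f(·,·; z) is G_α-Lipschitz (in the Euclidean norm on ℝ^{d+1}) where G_α = max{ √(G² + (1−α)²)/α, 1 }. -/

import Mathlib

/-!
Since `α > 0`, `(1/α)·[ℓ(w) - τ]₊ + τ = max (ℓ(w)/α + (1 - 1/α)·τ) τ`. The first argument of the
max is a sum of a `G/α`-Lipschitz function of `w` and a `|1 - 1/α|`-Lipschitz function of `τ`, so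
by the triangle inequality and Cauchy–Schwarz it is `√((G/α)² + ((1-α)/α)²)`-Lipschitz for the
Euclidean distance on `(w, τ)`; the second is `1`-Lipschitz, and a max of Lipschitz functions is
Lipschitz with the larger constant.
-/

open NNReal

lemma mul_add_mul_le_sqrt_mul_sqrt (a b c d : ℝ) :
    a * c + b * d ≤ √(a ^ 2 + b ^ 2) * √(c ^ 2 + d ^ 2) := by
  rw [← Real.sqrt_mul (by positivity)]
  exact (le_abs_self _).trans (Real.abs_le_sqrt (by nlinarith [sq_nonneg (a * d - b * c)]))

lemma LipschitzWith.withLp_two_fst_add_snd {E F H : Type*} [SeminormedAddCommGroup E]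
    [SeminormedAddCommGroup F] [SeminormedAddCommGroup H] {f : E → H} {g : F → H}
    {Kf Kg : ℝ≥0} (hf : LipschitzWith Kf f) (hg : LipschitzWith Kg g) :
    LipschitzWith (NNReal.sqrt (Kf ^ 2 + Kg ^ 2))
      (fun x : WithLp 2 (E × F) => f x.fst + g x.snd) := by
  refine .of_dist_le_mul fun x y => ?_
  rw [WithLp.prod_dist_eq_of_L2]
  calc dist (f x.fst + g x.snd) (f y.fst + g y.snd)
      ≤ dist (f x.fst) (f y.fst) + dist (g x.snd) (g y.snd) := dist_add_add_le ..
    _ ≤ Kf * dist x.fst y.fst + Kg * dist x.snd y.snd :=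
      add_le_add (hf.dist_le_mul ..) (hg.dist_le_mul ..)
    _ ≤ √(Kf ^ 2 + Kg ^ 2) * √(dist x.fst y.fst ^ 2 + dist x.snd y.snd ^ 2) :=
      mul_add_mul_le_sqrt_mul_sqrt ..
    _ = _ := by simp

lemma one_div_mul_max_sub_zero_add {α : ℝ} (hα : 0 < α) (a t : ℝ) :
    1 / α * max (a - t) 0 + t = max (1 / α * a + (1 - 1 / α) * t) t := by
  rw [mul_max_of_nonneg _ _ (by positivity), mul_zero, ← max_add_add_right, zero_add]
  ring_nf

lemma sqrt_sq_div_add_sq_one_sub_one_div {α : ℝ} (hα : 0 < α) (K : ℝ) :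
    √((1 / α * K) ^ 2 + (1 - 1 / α) ^ 2) = √(K ^ 2 + (1 - α) ^ 2) / α := by
  rw [show (1 / α * K) ^ 2 + (1 - 1 / α) ^ 2 = (K ^ 2 + (1 - α) ^ 2) / α ^ 2 by
      field_simp; ring,
    Real.sqrt_div' _ (sq_nonneg α), Real.sqrt_sq hα.le]

theorem lipschitzWith_cvar_objective {E : Type*} [SeminormedAddCommGroup E] {ℓ : E → ℝ}
    {K : ℝ≥0} {α : ℝ} (hα : 0 < α) (hℓ : LipschitzWith K ℓ) :
    LipschitzWith (Real.toNNReal (max (√(K ^ 2 + (1 - α) ^ 2) / α) 1))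
      (fun x : WithLp 2 (E × ℝ) => 1 / α * max (ℓ x.fst - x.snd) 0 + x.snd) := by
  have hmain := ((lipschitzWith_smul (1 / α)).comp hℓ).withLp_two_fst_add_snd
    (lipschitzWith_smul (1 - 1 / α))
  have hsnd : LipschitzWith 1 (WithLp.snd : WithLp 2 (E × ℝ) → ℝ) :=
    .of_edist_le WithLp.edist_snd_le
  simp_rw [one_div_mul_max_sub_zero_add hα]
  refine (hmain.max hsnd).weaken (le_of_eq ?_)
  rw [← NNReal.coe_inj, Real.coe_toNNReal _ (le_max_of_le_right zero_le_one)]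
  push_cast
  rw [Real.norm_eq_abs, Real.norm_eq_abs, abs_of_pos (by positivity), sq_abs,
    sqrt_sq_div_add_sq_one_sub_one_div hα]

theorem stmt_2_general {d : ℕ} {Z : Type*} (α G : ℝ) (hα : α ∈ Set.Ioc (0 : ℝ) 1)
    (ℓ : EuclideanSpace ℝ (Fin d) → Z → ℝ)
    (hℓ : ∀ z : Z, LipschitzWith (Real.toNNReal G) (fun w => ℓ w z)) :
    ∀ z : Z,
      LipschitzWith
        (Real.toNNReal (max (Real.sqrt (G ^ 2 + (1 - α) ^ 2) / α) 1))
        (fun x : WithLp 2 (EuclideanSpace ℝ (Fin d) × ℝ) =>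
          (1 / α) * max (ℓ (WithLp.equiv 2 _ x).1 z - (WithLp.equiv 2 _ x).2) 0
            + (WithLp.equiv 2 _ x).2) := by
  intro z
  refine (lipschitzWith_cvar_objective hα.1 (hℓ z)).weaken ?_
  gcongr Real.toNNReal (max (√(?_ + _) / _) _)
  · exact hα.1.le
  · rw [sq_le_sq, abs_of_nonneg G.toNNReal.coe_nonneg, Real.coe_toNNReal']
    exact max_le (le_abs_self G) (abs_nonneg G)

theorem stmt_2 {d : ℕ} {Z : Type*} (α G : ℝ) (hα : α ∈ Set.Ioc (0 : ℝ) 1) (hG : 0 ≤ G)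
    (ℓ : EuclideanSpace ℝ (Fin d) → Z → ℝ)
    (hℓ : ∀ z : Z, LipschitzWith (Real.toNNReal G) (fun w => ℓ w z)) :
    ∀ z : Z,
      LipschitzWith
        (Real.toNNReal (max (Real.sqrt (G ^ 2 + (1 - α) ^ 2) / α) 1))
        (fun x : WithLp 2 (EuclideanSpace ℝ (Fin d) × ℝ) =>
          (1 / α) * max (ℓ (WithLp.equiv 2 _ x).1 z - (WithLp.equiv 2 _ x).2) 0
            + (WithLp.equiv 2 _ x).2) :=
  stmt_2_general α G hα ℓ hℓ
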